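/- arXiv:2403.16434 — 2 statements merged into one kernel-verified Lean document; each statement's English description precedes it below -/
import Mathlib

section
/- Let ε > 0, let B : ℂ → ℂ be holomorphic on the disk D(0,ε) = {|z| < ε}, let P : ℂ → ℂ satisfy P'(z) = B(z) for all z ∈ D(0,ε), let b ∈ ℂ and a ∈ ℝ. For 0 < |z| < ε define G(z) = b/z + a·z + z²·B(z) and ψ(z) = ( G(z) + 1/conj(z), ½(|G(z)|² − 1/|z|²) + Re(G(z)/z) − 2a·log|z| − Re(b/z²) − 2·Re(z·B(z) + P(z)) ) ∈ ℂ × ℝ, and the model end M(z) = ( b/z + a·z + 1/conj(z), ½(|b|²/|z|² + a²|z|² − 1/|z|²) − 2a·log|z| + a·Re(b·conj(z)/z) ). Then there exists v ∈ ℂ × ℝ such that ψ(z) − M(z) → v as z → 0 (z ≠ 0). In particular, every normalized complete embedded end of an improper affine front is, up to a translation, asymptotic to the explicit model end M. -/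
open Complex Filter Topology

/-- The surface `ψ` of a normalized complete embedded end of an improper affine front,
with Weierstrass data `F = 1/z`, `G = b/z + a·z + z²·B(z)`. -/
noncomputable def psiEnd (B P : ℂ → ℂ) (b : ℂ) (a : ℝ) (z : ℂ) : ℂ × ℝ :=
  (b / z + (a : ℂ) * z + z ^ 2 * B z + 1 / (starRingEnd ℂ) z,
    (1 / 2 : ℝ) * (‖b / z + (a : ℂ) * z + z ^ 2 * B z‖ ^ 2
        - 1 / ‖z‖ ^ 2)
      + ((b / z + (a : ℂ) * z + z ^ 2 * B z) / z).re
      - 2 * a * Real.log ‖z‖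
      - (b / z ^ 2).re
      - 2 * (z * B z + P z).re)

/-- The explicit model end `M`. -/
noncomputable def modelEnd (b : ℂ) (a : ℝ) (z : ℂ) : ℂ × ℝ :=
  (b / z + (a : ℂ) * z + 1 / (starRingEnd ℂ) z,
    (1 / 2 : ℝ) * (‖b‖ ^ 2 / ‖z‖ ^ 2 + a ^ 2 * ‖z‖ ^ 2
        - 1 / ‖z‖ ^ 2)
      - 2 * a * Real.log ‖z‖
      + a * (b * (starRingEnd ℂ) z / z).re)

lemma key_identity (b z w q : ℂ) (a L : ℝ) (hz : z ≠ 0) :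
    ((1 / 2 : ℝ) * (‖b / z + (a : ℂ) * z + z ^ 2 * w‖ ^ 2
        - 1 / ‖z‖ ^ 2)
      + ((b / z + (a : ℂ) * z + z ^ 2 * w) / z).re
      - 2 * a * L
      - (b / z ^ 2).re
      - 2 * (z * w + q).re)
    - ((1 / 2 : ℝ) * (‖b‖ ^ 2 / ‖z‖ ^ 2 + a ^ 2 * ‖z‖ ^ 2
        - 1 / ‖z‖ ^ 2)
      - 2 * a * L
      + a * (b * (starRingEnd ℂ) z / z).re)
    = ((b / z + (a : ℂ) * z) * (starRingEnd ℂ) (z ^ 2 * w)).re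
      + (1 / 2 : ℝ) * ‖z ^ 2 * w‖ ^ 2 + a - (z * w).re - 2 * q.re := by
  have hG : (b / z + (a : ℂ) * z + z ^ 2 * w) / z = b / z ^ 2 + (a : ℂ) + z * w := by
    field_simp
  have h1 : ‖b / z + (a : ℂ) * z + z ^ 2 * w‖ ^ 2
      = ‖b / z + (a : ℂ) * z‖ ^ 2
        + 2 * ((b / z + (a : ℂ) * z) * (starRingEnd ℂ) (z ^ 2 * w)).re
        + ‖z ^ 2 * w‖ ^ 2 := by
    rw [Complex.sq_norm, Complex.sq_norm, Complex.sq_norm, Complex.normSq_add]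
    ring
  have h2c : (b / z) * (starRingEnd ℂ) ((a : ℂ) * z) = (a : ℂ) * (b * (starRingEnd ℂ) z / z) := by
    simp only [map_mul, Complex.conj_ofReal]
    ring
  have h2 : ‖b / z + (a : ℂ) * z‖ ^ 2
      = ‖b‖ ^ 2 / ‖z‖ ^ 2 + a ^ 2 * ‖z‖ ^ 2
        + 2 * (a * (b * (starRingEnd ℂ) z / z).re) := by
    rw [Complex.sq_norm, Complex.sq_norm, Complex.sq_norm, Complex.normSq_add, h2c,
      Complex.normSq_div, Complex.normSq_mul, Complex.normSq_ofReal]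
    simp only [Complex.re_ofReal_mul]
    ring
  rw [hG, h1, h2]
  simp only [Complex.add_re, Complex.ofReal_re, Complex.mul_re]
  ring

theorem end_asymptotic_to_model (ε : ℝ) (hε : 0 < ε) (B P : ℂ → ℂ)
    (hB : DifferentiableOn ℂ B (Metric.ball (0 : ℂ) ε))
    (hP : ∀ z ∈ Metric.ball (0 : ℂ) ε, HasDerivAt P (B z) z)
    (b : ℂ) (a : ℝ) :
    ∃ v : ℂ × ℝ,
      Tendsto (fun z : ℂ => psiEnd B P b a z - modelEnd b a z)
        (𝓝[≠] (0 : ℂ)) (𝓝 v) := by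
  refine ⟨(0, a - 2 * (P 0).re), ?_⟩
  have h0 : (0 : ℂ) ∈ Metric.ball (0 : ℂ) ε := by simpa using hε
  have hBc : ContinuousAt B 0 :=
    (hB.differentiableAt (Metric.isOpen_ball.mem_nhds h0)).continuousAt
  have hPc : ContinuousAt P 0 := (hP 0 h0).continuousAt
  -- limit of the first component
  have l1 : Tendsto (fun z : ℂ => z ^ 2 * B z) (𝓝[≠] (0 : ℂ)) (𝓝 0) := by
    have hc : ContinuousAt (fun z : ℂ => z ^ 2 * B z) 0 := (continuousAt_id.pow 2).mul hBc
    have h : Tendsto (fun z : ℂ => z ^ 2 * B z) (𝓝[≠] (0 : ℂ)) (𝓝 ((0 : ℂ) ^ 2 * B 0)) :=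
      hc.tendsto.mono_left nhdsWithin_le_nhds
    simpa using h
  -- limit of the "E" term
  have lE : Tendsto (fun z : ℂ =>
      ((b / z + (a : ℂ) * z) * (starRingEnd ℂ) (z ^ 2 * B z)).re)
      (𝓝[≠] (0 : ℂ)) (𝓝 0) := by
    have hbound : Tendsto (fun z : ℂ =>
        (‖b‖ * ‖z‖ + |a| * ‖z‖ ^ 3) * ‖B z‖)
        (𝓝[≠] (0 : ℂ)) (𝓝 0) := by
      have : ContinuousAt (fun z : ℂ =>
          (‖b‖ * ‖z‖ + |a| * ‖z‖ ^ 3) * ‖B z‖) 0 := by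
        exact (((continuousAt_const.mul continuous_norm.continuousAt).add
          (continuousAt_const.mul (continuous_norm.continuousAt.pow 3))).mul
          (continuous_norm.continuousAt.comp hBc))
      have h : Tendsto (fun z : ℂ =>
          (‖b‖ * ‖z‖ + |a| * ‖z‖ ^ 3) * ‖B z‖)
          (𝓝[≠] (0 : ℂ)) (𝓝 ((‖b‖ * ‖(0 : ℂ)‖ + |a| * ‖(0 : ℂ)‖ ^ 3)
            * ‖B 0‖)) :=
        this.tendsto.mono_left nhdsWithin_le_nhds
      simpa using h
    refine squeeze_zero_norm' ?_ hbound
    filter_upwards [self_mem_nhdsWithin] with z hz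
    have hz' : z ≠ 0 := hz
    have habs : ‖z‖ ≠ 0 := norm_ne_zero_iff.mpr hz'
    have step1 : ‖((b / z + (a : ℂ) * z) * (starRingEnd ℂ) (z ^ 2 * B z)).re‖
        ≤ ‖(b / z + (a : ℂ) * z) * (starRingEnd ℂ) (z ^ 2 * B z)‖ := by
      rw [Real.norm_eq_abs]
      exact Complex.abs_re_le_norm _
    refine step1.trans ?_
    rw [norm_mul, Complex.norm_conj, norm_mul, norm_pow]
    have step2 : ‖b / z + (a : ℂ) * z‖
        ≤ ‖b‖ / ‖z‖ + |a| * ‖z‖ := by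
      refine (norm_add_le _ _).trans ?_
      rw [norm_div, norm_mul, Complex.norm_real, Real.norm_eq_abs]
    have hnn : (0 : ℝ) ≤ ‖z‖ ^ 2 * ‖B z‖ := by positivity
    calc ‖b / z + (a : ℂ) * z‖ * (‖z‖ ^ 2 * ‖B z‖)
        ≤ (‖b‖ / ‖z‖ + |a| * ‖z‖)
            * (‖z‖ ^ 2 * ‖B z‖) := by
          exact mul_le_mul_of_nonneg_right step2 hnn
      _ = (‖b‖ * ‖z‖ + |a| * ‖z‖ ^ 3) * ‖B z‖ := by
          field_simp
  -- limit of the second component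
  have labs : Tendsto (fun z : ℂ => (1 / 2 : ℝ) * ‖z ^ 2 * B z‖ ^ 2)
      (𝓝[≠] (0 : ℂ)) (𝓝 0) := by
    have h := ((((continuous_norm.tendsto (0 : ℂ)).comp l1).pow 2).const_mul (1 / 2 : ℝ))
    simpa using h
  have lzw : Tendsto (fun z : ℂ => (z * B z).re) (𝓝[≠] (0 : ℂ)) (𝓝 0) := by
    have hm : Tendsto (fun z : ℂ => z * B z) (𝓝[≠] (0 : ℂ)) (𝓝 0) := by
      have hc : ContinuousAt (fun z : ℂ => z * B z) 0 := continuousAt_id.mul hBc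
      have h : Tendsto (fun z : ℂ => z * B z) (𝓝[≠] (0 : ℂ)) (𝓝 ((0 : ℂ) * B 0)) :=
        hc.tendsto.mono_left nhdsWithin_le_nhds
      simpa using h
    have h := (Complex.continuous_re.tendsto (0 : ℂ)).comp hm
    simpa [Function.comp_def] using h
  have lP : Tendsto (fun z : ℂ => 2 * (P z).re) (𝓝[≠] (0 : ℂ)) (𝓝 (2 * (P 0).re)) := by
    have h1 : Tendsto (fun z : ℂ => P z) (𝓝[≠] (0 : ℂ)) (𝓝 (P 0)) :=
      hPc.tendsto.mono_left nhdsWithin_le_nhds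
    have h := (((Complex.continuous_re.tendsto (P 0)).comp h1).const_mul (2 : ℝ))
    simpa using h
  have l2 : Tendsto (fun z : ℂ =>
      ((b / z + (a : ℂ) * z) * (starRingEnd ℂ) (z ^ 2 * B z)).re
        + (1 / 2 : ℝ) * ‖z ^ 2 * B z‖ ^ 2 + a - (z * B z).re - 2 * (P z).re)
      (𝓝[≠] (0 : ℂ)) (𝓝 (a - 2 * (P 0).re)) := by
    have h := ((((lE.add labs).add (tendsto_const_nhds (x := a))).sub lzw).sub lP)
    simpa using h
  have heq : (fun z : ℂ => psiEnd B P b a z - modelEnd b a z)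
      =ᶠ[𝓝[≠] (0 : ℂ)] (fun z : ℂ =>
        (z ^ 2 * B z,
          ((b / z + (a : ℂ) * z) * (starRingEnd ℂ) (z ^ 2 * B z)).re
            + (1 / 2 : ℝ) * ‖z ^ 2 * B z‖ ^ 2 + a - (z * B z).re - 2 * (P z).re)) := by
    filter_upwards [self_mem_nhdsWithin] with z hz
    have hz' : z ≠ 0 := hz
    have hsecond := key_identity b z (B z) (P z) a (Real.log ‖z‖) hz'
    simp only [psiEnd, modelEnd, Prod.mk_sub_mk, Prod.mk.injEq]
    constructor
    · ring
    · exact hsecond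
  exact (Tendsto.congr' heq.symm (l1.prodMk_nhds l2))
end

section
/- Let n ≥ 2 be an integer, ζ = exp(2πi/n), η = exp(πi/n), and let λ₀, …, λ_{n−1}, μ₀, …, μ_{n−1} be nonzero real numbers. Define F(z) = Σ_{j=0}^{n−1} λ_j·η·ζ^j/(z − ζ^j) and G(z) = Σ_{k=0}^{n−1} μ_k·ζ^k/(z − η·ζ^k). Then for every point c in {ζ^l : 0 ≤ l ≤ n−1} ∪ {η·ζ^m : 0 ≤ m ≤ n−1} and every r with 0 < r < sin(π/(2n)), the circle integral ∮_{|z−c|=r} F(z)·G'(z) dz has zero real part (equivalently, the residue of F dG at each of the 2n simple poles is a real number). -/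
open Complex Filter Topology Metric

-- reality lemma
lemma aux_im_zero (u v : ℂ) (hu : ‖u‖ = 1) (hv : ‖v‖ = 1) (huv : u ≠ v) :
    (u * v / (u - v) ^ 2).im = 0 := by
  have hu0 : u ≠ 0 := by intro h; simp [h] at hu
  have hv0 : v ≠ 0 := by intro h; simp [h] at hv
  have huv' : u - v ≠ 0 := sub_ne_zero.2 huv
  have hcu : (starRingEnd ℂ) u = u⁻¹ := (Complex.inv_eq_conj (by simpa using hu)).symm
  have hcv : (starRingEnd ℂ) v = v⁻¹ := (Complex.inv_eq_conj (by simpa using hv)).symm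
  have h : (starRingEnd ℂ) (u * v / (u - v) ^ 2) = u * v / (u - v) ^ 2 := by
    rw [map_div₀, map_mul, map_pow, map_sub, hcu, hcv, inv_sub_inv hu0 hv0, div_pow, div_div_eq_mul_div]
    have hvu : v - u ≠ 0 := fun h => huv (sub_eq_zero.mp h).symm
    field_simp
    ring
  exact Complex.conj_eq_iff_im.mp h

-- circle integral of finite sum
lemma aux_circleIntegral_sum {ι : Type*} (s : Finset ι) (f : ι → ℂ → ℂ) (c : ℂ) (R : ℝ)
    (h : ∀ i ∈ s, CircleIntegrable (f i) c R) :
    (∮ z in C(c, R), ∑ i ∈ s, f i z) = ∑ i ∈ s, ∮ z in C(c, R), f i z := by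
  simp only [circleIntegral, smul_eq_mul, Finset.mul_sum]
  rw [intervalIntegral.integral_finset_sum]
  intro i hi
  simpa [smul_eq_mul] using (h i hi).out

-- off-circle inverse integral is zero
lemma aux_integral_inv_zero {c w : ℂ} {r : ℝ} (hr : 0 ≤ r) (hw : r < dist w c) :
    (∮ z in C(c, r), (z - w)⁻¹) = 0 := by
  have hne : ∀ z ∈ closedBall c r, z - w ≠ 0 := by
    intro z hz
    rw [sub_ne_zero]
    intro h
    rw [h] at hz
    exact absurd (mem_closedBall.mp hz) (not_le.mpr hw)
  refine Complex.circleIntegral_eq_zero_of_differentiable_on_off_countable hr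
    (Set.countable_empty) ((continuousOn_id.sub continuousOn_const).inv₀ hne) ?_
  intro z hz
  exact (differentiableAt_id.sub_const w).inv
    (hne z (ball_subset_closedBall hz.1))

lemma aux_integral_add {f g : ℂ → ℂ} {c : ℂ} {R : ℝ} (hf : CircleIntegrable f c R)
    (hg : CircleIntegrable g c R) :
    (∮ z in C(c, R), (f z + g z)) = (∮ z in C(c, R), f z) + ∮ z in C(c, R), g z := by
  simp only [circleIntegral, smul_add, intervalIntegral.integral_add hf.out hg.out]

lemma aux_ci (c w : ℂ) (r : ℝ) (hr : 0 ≤ r) (hw : w ∉ Metric.sphere c r) (K : ℂ) (m : ℤ) :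
    CircleIntegrable (fun z => K * (z - w) ^ m) c r := by
  refine (continuousOn_const.mul ((continuousOn_id.sub continuousOn_const).zpow₀ m ?_)).circleIntegrable hr
  intro z hz
  exact Or.inl (sub_ne_zero.2 (fun h => hw ((show z = w from h) ▸ hz)))

lemma aux_pf (z pp qq : ℂ) (h1 : z - pp ≠ 0) (h2 : z - qq ≠ 0) (h3 : pp - qq ≠ 0) :
    (z - pp)⁻¹ * ((z - qq) ^ 2)⁻¹ =
    ((pp - qq) ^ 2)⁻¹ * (z - pp)⁻¹ - ((pp - qq) ^ 2)⁻¹ * (z - qq)⁻¹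
      - (pp - qq)⁻¹ * ((z - qq) ^ 2)⁻¹ := by
  have huv : (z - pp)⁻¹ - (z - qq)⁻¹ = (pp - qq) * ((z - pp)⁻¹ * (z - qq)⁻¹) := by
    rw [inv_sub_inv h1 h2, div_eq_mul_inv, mul_inv]
    ring
  have huv' : (z - pp)⁻¹ * (z - qq)⁻¹ = (pp - qq)⁻¹ * ((z - pp)⁻¹ - (z - qq)⁻¹) := by
    rw [huv, ← mul_assoc, inv_mul_cancel₀ h3, one_mul]
  calc (z - pp)⁻¹ * ((z - qq) ^ 2)⁻¹
      = ((z - pp)⁻¹ * (z - qq)⁻¹) * (z - qq)⁻¹ := by simp only [sq, mul_inv]; ring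
    _ = ((pp - qq)⁻¹ * ((z - pp)⁻¹ - (z - qq)⁻¹)) * (z - qq)⁻¹ := by rw [huv']
    _ = (pp - qq)⁻¹ * ((z - pp)⁻¹ * (z - qq)⁻¹) - (pp - qq)⁻¹ * ((z - qq)⁻¹ * (z - qq)⁻¹) := by
        ring
    _ = (pp - qq)⁻¹ * ((pp - qq)⁻¹ * ((z - pp)⁻¹ - (z - qq)⁻¹))
          - (pp - qq)⁻¹ * ((z - qq)⁻¹ * (z - qq)⁻¹) := by rw [huv']
    _ = _ := by simp only [sq, mul_inv]; ring

lemma aux_key (n : ℕ) (a b p q : Fin n → ℂ) (c : ℂ) (r : ℝ) (hr : 0 < r)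
    (hpq : ∀ j k, p j ≠ q k)
    (hp : ∀ j, p j = c ∨ r < dist (p j) c)
    (hq : ∀ k, q k = c ∨ r < dist (q k) c) :
    (∮ z in C(c, r), (∑ j : Fin n, a j / (z - p j)) *
        deriv (fun w => ∑ k : Fin n, b k / (w - q k)) z)
      = ∑ j : Fin n, ∑ k : Fin n, (-(a j * b k) * ((p j - q k)⁻¹) ^ 2) *
          ((if p j = c then (2 * Real.pi * Complex.I : ℂ) else 0) -
           (if q k = c then (2 * Real.pi * Complex.I : ℂ) else 0)) := by
  have hoff : ∀ (w : ℂ), (w = c ∨ r < dist w c) → w ∉ Metric.sphere c r := by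
    rintro w (rfl | h) hmem <;> rw [Metric.mem_sphere] at hmem
    · rw [dist_self] at hmem; exact hr.ne hmem
    · exact lt_irrefl r (hmem ▸ h)
  have hpo : ∀ j, p j ∉ Metric.sphere c r := fun j => hoff _ (hp j)
  have hqo : ∀ k, q k ∉ Metric.sphere c r := fun k => hoff _ (hq k)
  have hzp : ∀ z ∈ Metric.sphere c r, ∀ j, z - p j ≠ 0 := by
    intro z hz j h
    exact hpo j ((sub_eq_zero.mp h) ▸ hz)
  have hzq : ∀ z ∈ Metric.sphere c r, ∀ k, z - q k ≠ 0 := by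
    intro z hz k h
    exact hqo k ((sub_eq_zero.mp h) ▸ hz)
  set g : Fin n × Fin n → ℂ → ℂ := fun jk z =>
    (-(a jk.1 * b jk.2) * ((p jk.1 - q jk.2)⁻¹) ^ 2) * (z - p jk.1) ^ (-1 : ℤ) +
    ((-(-(a jk.1 * b jk.2) * ((p jk.1 - q jk.2)⁻¹) ^ 2)) * (z - q jk.2) ^ (-1 : ℤ) +
     ((a jk.1 * b jk.2) * (p jk.1 - q jk.2)⁻¹) * (z - q jk.2) ^ (-2 : ℤ)) with hg
  have heq : Set.EqOn (fun z => (∑ j : Fin n, a j / (z - p j)) *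
      deriv (fun w => ∑ k : Fin n, b k / (w - q k)) z)
      (fun z => ∑ jk : Fin n × Fin n, g jk z) (Metric.sphere c r) := by
    intro z hz
    have hG : HasDerivAt (fun w => ∑ k : Fin n, b k / (w - q k))
        (∑ k : Fin n, (0 * (z - q k) - b k * 1) / (z - q k) ^ 2) z := by
      refine HasDerivAt.fun_sum fun k _ => ?_
      exact (hasDerivAt_const z (b k)).div ((hasDerivAt_id z).sub_const (q k))
        (hzq z hz k)
    simp only
    rw [hG.deriv, Finset.sum_mul_sum, ← Finset.sum_product']
    rw [show (Finset.univ : Finset (Fin n × Fin n)) = Finset.univ ×ˢ Finset.univ from rfl]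
    refine Finset.sum_congr rfl fun jk _ => ?_
    have h1 : z - p jk.1 ≠ 0 := hzp z hz jk.1
    have h2 : z - q jk.2 ≠ 0 := hzq z hz jk.2
    have h3 : p jk.1 - q jk.2 ≠ 0 := sub_ne_zero.2 (hpq jk.1 jk.2)
    rw [hg]
    simp only
    rw [show ((z - q jk.2) ^ (-2 : ℤ)) = ((z - q jk.2) ^ 2)⁻¹ by
          rw [zpow_neg, zpow_two, sq],
        zpow_neg, zpow_one, zpow_neg, zpow_one]
    have lhs_eq : a jk.1 / (z - p jk.1) * ((0 * (z - q jk.2) - b jk.2 * 1) / (z - q jk.2) ^ 2)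
        = (a jk.1 * (-b jk.2)) * ((z - p jk.1)⁻¹ * ((z - q jk.2) ^ 2)⁻¹) := by
      rw [div_eq_mul_inv, div_eq_mul_inv]
      ring
    rw [lhs_eq, aux_pf z _ _ h1 h2 h3]
    simp only [← inv_pow]
    ring
  rw [circleIntegral.integral_congr hr.le heq]
  have hci : ∀ jk : Fin n × Fin n, CircleIntegrable (g jk) c r := by
    intro jk
    exact ((aux_ci c (p jk.1) r hr.le (hpo jk.1) _ (-1)).add
      ((aux_ci c (q jk.2) r hr.le (hqo jk.2) _ (-1)).add
       (aux_ci c (q jk.2) r hr.le (hqo jk.2) _ (-2))))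
  rw [aux_circleIntegral_sum Finset.univ g c r (fun jk _ => hci jk)]
  rw [← Finset.sum_product']
  refine Finset.sum_congr rfl fun jk _ => ?_
  have e1 : (∮ z in C(c, r), (z - p jk.1) ^ (-1 : ℤ))
      = if p jk.1 = c then (2 * Real.pi * Complex.I : ℂ) else 0 := by
    simp only [zpow_neg, zpow_one]
    rcases hp jk.1 with h | h
    · rw [if_pos h, h]
      exact circleIntegral.integral_sub_inv_of_mem_ball (Metric.mem_ball_self hr)
    · rw [if_neg (by intro hc; rw [hc, dist_self] at h; exact absurd h (not_lt.mpr hr.le))]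
      exact aux_integral_inv_zero hr.le h
  have e2 : (∮ z in C(c, r), (z - q jk.2) ^ (-1 : ℤ))
      = if q jk.2 = c then (2 * Real.pi * Complex.I : ℂ) else 0 := by
    simp only [zpow_neg, zpow_one]
    rcases hq jk.2 with h | h
    · rw [if_pos h, h]
      exact circleIntegral.integral_sub_inv_of_mem_ball (Metric.mem_ball_self hr)
    · rw [if_neg (by intro hc; rw [hc, dist_self] at h; exact absurd h (not_lt.mpr hr.le))]
      exact aux_integral_inv_zero hr.le h
  have e3 : (∮ z in C(c, r), (z - q jk.2) ^ (-2 : ℤ)) = 0 :=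
    circleIntegral.integral_sub_zpow_of_ne (by decide) _ _ _
  rw [hg]
  simp only
  have ci1 : CircleIntegrable (fun z =>
      (-(a jk.1 * b jk.2) * ((p jk.1 - q jk.2)⁻¹) ^ 2) * (z - p jk.1) ^ (-1 : ℤ)) c r :=
    aux_ci c (p jk.1) r hr.le (hpo jk.1) _ (-1)
  have ci2 : CircleIntegrable (fun z =>
      (-(-(a jk.1 * b jk.2) * ((p jk.1 - q jk.2)⁻¹) ^ 2)) * (z - q jk.2) ^ (-1 : ℤ)) c r :=
    aux_ci c (q jk.2) r hr.le (hqo jk.2) _ (-1)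
  have ci3 : CircleIntegrable (fun z =>
      ((a jk.1 * b jk.2) * (p jk.1 - q jk.2)⁻¹) * (z - q jk.2) ^ (-2 : ℤ)) c r :=
    aux_ci c (q jk.2) r hr.le (hqo jk.2) _ (-2)
  have ci23 : CircleIntegrable (fun z =>
      (-(-(a jk.1 * b jk.2) * ((p jk.1 - q jk.2)⁻¹) ^ 2)) * (z - q jk.2) ^ (-1 : ℤ) +
      ((a jk.1 * b jk.2) * (p jk.1 - q jk.2)⁻¹) * (z - q jk.2) ^ (-2 : ℤ)) c r := ci2.add ci3
  rw [aux_integral_add ci1 ci23, aux_integral_add ci2 ci3,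
      circleIntegral.integral_const_mul, circleIntegral.integral_const_mul,
      circleIntegral.integral_const_mul, e1, e2, e3]
  ring


lemma aux_sin_ge {A x : ℝ} (hA0 : 0 ≤ A) (h1 : A ≤ x) (h2 : x ≤ Real.pi - A) :
    Real.sin A ≤ Real.sin x := by
  rcases le_or_gt x (Real.pi / 2) with hx | hx
  · exact Real.strictMonoOn_sin.monotoneOn ⟨by linarith [Real.pi_pos], by linarith⟩
      ⟨by linarith [Real.pi_pos], hx⟩ h1
  · rw [show Real.sin x = Real.sin (Real.pi - x) from (Real.sin_pi_sub x).symm]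
    exact Real.strictMonoOn_sin.monotoneOn ⟨by linarith [Real.pi_pos], by linarith⟩
      ⟨by linarith [Real.pi_pos], by linarith⟩ (by linarith)

lemma aux_abs_exp_sub_one (θ : ℝ) :
    ‖Complex.exp ((θ : ℂ) * Complex.I) - 1‖ ^ 2 = 2 - 2 * Real.cos θ := by
  rw [Complex.exp_mul_I, Complex.sq_norm]
  simp only [Complex.normSq_apply, Complex.sub_re, Complex.add_re, Complex.mul_re,
    Complex.cos_ofReal_re, Complex.sin_ofReal_re, Complex.cos_ofReal_im, Complex.sin_ofReal_im,
    Complex.I_re, Complex.I_im, Complex.one_re, Complex.one_im, Complex.sub_im, Complex.add_im,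
    Complex.mul_im]
  nlinarith [Real.sin_sq_add_cos_sq θ]

set_option maxHeartbeats 1000000 in
lemma aux_dist (n : ℕ) (hn : 2 ≤ n) (s t : ℕ) (hs : s < 2 * n) (ht : t < 2 * n) (hst : t < s) :
    Real.sin (Real.pi / (2 * n)) < ‖
      (Complex.exp ((((s : ℝ) * Real.pi / n : ℝ) : ℂ) * Complex.I)
        - Complex.exp ((((t : ℝ) * Real.pi / n : ℝ) : ℂ) * Complex.I))‖ := by
  have hnR : (0:ℝ) < n := by positivity
  set d : ℕ := s - t with hd
  have hd1 : 1 ≤ d := by omega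
  have hd2 : d ≤ 2 * n - 1 := by omega
  have htd : t + d = s := by omega
  have hts : (s : ℝ) = (t : ℝ) + (d : ℝ) := by exact_mod_cast congrArg (Nat.cast : ℕ → ℝ) htd.symm
  have harg : ((t:ℝ) * Real.pi / n) + ((d:ℝ) * Real.pi / n) = (s:ℝ) * Real.pi / n := by
    rw [hts]; ring
  have hfac : Complex.exp ((((s : ℝ) * Real.pi / n : ℝ) : ℂ) * Complex.I)
        - Complex.exp ((((t : ℝ) * Real.pi / n : ℝ) : ℂ) * Complex.I)
      = Complex.exp ((((t : ℝ) * Real.pi / n : ℝ) : ℂ) * Complex.I) *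
        (Complex.exp ((((d : ℝ) * Real.pi / n : ℝ) : ℂ) * Complex.I) - 1) := by
    rw [mul_sub, mul_one, ← Complex.exp_add, ← add_mul, ← Complex.ofReal_add, harg]
  rw [hfac, norm_mul]
  have habs1 : ‖(Complex.exp ((((t : ℝ) * Real.pi / n : ℝ) : ℂ) * Complex.I))‖ = 1 := by
    simp [Complex.norm_exp]
  rw [habs1, one_mul]
  set x : ℝ := (d:ℝ) * Real.pi / n with hx
  have hsq := aux_abs_exp_sub_one x
  have hcos : Real.cos x = 1 - 2 * Real.sin (x / 2) ^ 2 := by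
    have h := Real.cos_two_mul (x / 2)
    have h2 := Real.sin_sq_add_cos_sq (x / 2)
    rw [show 2 * (x / 2) = x by ring] at h
    nlinarith
  have habs2 : ‖Complex.exp ((x : ℂ) * Complex.I) - 1‖ ^ 2
      = 4 * Real.sin (x / 2) ^ 2 := by rw [hsq, hcos]; ring
  have hx2 : x / 2 = (d:ℝ) * Real.pi / (2 * n) := by rw [hx]; ring
  have hdr : (d:ℝ) ≤ 2 * (n:ℝ) - 1 := by
    have hh : d + 1 ≤ 2 * n := by omega
    have h2 : ((d:ℝ) + 1) ≤ 2 * (n:ℝ) := by exact_mod_cast hh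
    linarith
  have hd1r : (1:ℝ) ≤ (d:ℝ) := by exact_mod_cast hd1
  have hA0 : (0:ℝ) ≤ Real.pi / (2 * n) := by positivity
  have hge : Real.sin (Real.pi / (2 * n)) ≤ Real.sin (x / 2) := by
    apply aux_sin_ge hA0
    · rw [hx2]
      gcongr
      nlinarith [Real.pi_pos]
    · rw [hx2, div_le_iff₀ (by positivity : (0:ℝ) < 2 * n), sub_mul,
        div_mul_cancel₀ _ (by positivity : (2 * (n:ℝ)) ≠ 0)]
      have h3 : (d:ℝ) * Real.pi ≤ (2 * (n:ℝ) - 1) * Real.pi :=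
        mul_le_mul_of_nonneg_right hdr Real.pi_pos.le
      linarith
  have hs0 : 0 < Real.sin (Real.pi / (2 * n)) := by
    apply Real.sin_pos_of_pos_of_lt_pi (by positivity)
    apply div_lt_self Real.pi_pos
    have : (2:ℝ) ≤ (n:ℝ) := by exact_mod_cast hn
    linarith
  have habsnn : 0 ≤ ‖Complex.exp ((x : ℂ) * Complex.I) - 1‖ :=
    norm_nonneg _
  by_contra hcon
  push_neg at hcon
  have h1 : ‖Complex.exp ((x : ℂ) * Complex.I) - 1‖ ^ 2
      ≤ Real.sin (Real.pi / (2 * n)) ^ 2 := by nlinarith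
  nlinarith [hge, hs0]


lemma aux_re_zero (y w : ℂ) (hy : y.im = 0) (hw : w.re = 0) : (y * w).re = 0 := by
  rw [Complex.mul_re, hy, hw]; ring

theorem jorge_meeks_type_period_condition
    (n : ℕ) (hn : 2 ≤ n)
    (lam mu : Fin n → ℝ)
    (hlam : ∀ j, lam j ≠ 0) (hmu : ∀ k, mu k ≠ 0) :
    let ζ : ℂ := Complex.exp (2 * Real.pi * Complex.I / n)
    let η : ℂ := Complex.exp (Real.pi * Complex.I / n)
    let F : ℂ → ℂ := fun z => ∑ j : Fin n, (lam j : ℂ) * η * ζ ^ (j : ℕ) / (z - ζ ^ (j : ℕ))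
    let G : ℂ → ℂ := fun z => ∑ k : Fin n, (mu k : ℂ) * ζ ^ (k : ℕ) / (z - η * ζ ^ (k : ℕ))
    ∀ c ∈ (Set.range fun l : Fin n => ζ ^ (l : ℕ)) ∪
        (Set.range fun m : Fin n => η * ζ ^ (m : ℕ)),
      ∀ r : ℝ, 0 < r → r < Real.sin (Real.pi / (2 * n)) →
        (∮ z in C(c, r), F z * deriv G z).re = 0 := by
  intro ζ η F G c hc r hr hrs
  have hnn : (0:ℕ) < n := by omega
  set E : ℕ → ℂ := fun t => Complex.exp ((((t:ℝ) * Real.pi / n : ℝ) : ℂ) * Complex.I) with hE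
  have hζ : ∀ j : ℕ, ζ ^ j = E (2 * j) := by
    intro j
    show Complex.exp (2 * Real.pi * Complex.I / n) ^ j = _
    rw [hE, ← Complex.exp_nat_mul]
    congr 1
    have hn0 : (n:ℂ) ≠ 0 := Nat.cast_ne_zero.2 (by omega)
    field_simp
    push_cast
    rw [mul_comm (n:ℂ), div_mul_cancel₀ _ hn0]
    ring
  have hη : ∀ k : ℕ, η * ζ ^ k = E (2 * k + 1) := by
    intro k
    show Complex.exp (Real.pi * Complex.I / n) *
        Complex.exp (2 * Real.pi * Complex.I / n) ^ k = _
    rw [hE, ← Complex.exp_nat_mul, ← Complex.exp_add]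
    congr 1
    have hn0 : (n:ℂ) ≠ 0 := Nat.cast_ne_zero.2 (by omega)
    field_simp
    push_cast
    rw [mul_comm (n:ℂ), div_mul_cancel₀ _ hn0]
    ring
  have habsE : ∀ t : ℕ, ‖E t‖ = 1 := by
    intro t
    simp [hE, Complex.norm_exp]
  have hdist : ∀ s t : ℕ, s < 2 * n → t < 2 * n → s ≠ t → r < dist (E s) (E t) := by
    intro s t hs ht hst
    rcases lt_or_gt_of_ne hst with h | h
    · rw [dist_comm, Complex.dist_eq]
      exact lt_trans hrs (aux_dist n hn t s ht hs h)
    · rw [Complex.dist_eq]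
      exact lt_trans hrs (aux_dist n hn s t hs ht h)
  have hpq : ∀ j k : Fin n, ζ ^ (j:ℕ) ≠ η * ζ ^ (k:ℕ) := by
    intro j k heq
    rw [hζ, hη] at heq
    have hd := hdist (2 * (j:ℕ)) (2 * (k:ℕ) + 1)
      (by have := j.isLt; omega) (by have := k.isLt; omega) (by omega)
    rw [heq, dist_self] at hd
    exact absurd hd (not_lt.mpr hr.le)
  have main : (∀ j : Fin n, ζ ^ (j:ℕ) = c ∨ r < dist (ζ ^ (j:ℕ)) c) →
      (∀ k : Fin n, η * ζ ^ (k:ℕ) = c ∨ r < dist (η * ζ ^ (k:ℕ)) c) →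
      (∮ z in C(c, r), F z * deriv G z).re = 0 := by
    intro hp hq
    have hFG : (∮ z in C(c, r), F z * deriv G z)
        = ∮ z in C(c, r),
            (∑ j : Fin n, ((lam j : ℂ) * η * ζ ^ (j:ℕ)) / (z - ζ ^ (j:ℕ))) *
            deriv (fun w => ∑ k : Fin n, ((mu k : ℂ) * ζ ^ (k:ℕ)) / (w - η * ζ ^ (k:ℕ))) z := rfl
    rw [hFG, aux_key n (fun j => (lam j : ℂ) * η * ζ ^ (j:ℕ))
          (fun k => (mu k : ℂ) * ζ ^ (k:ℕ))
          (fun j => ζ ^ (j:ℕ)) (fun k => η * ζ ^ (k:ℕ)) c r hr hpq hp hq]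
    rw [Complex.re_sum]
    refine Finset.sum_eq_zero fun j _ => ?_
    rw [Complex.re_sum]
    refine Finset.sum_eq_zero fun k _ => ?_
    apply aux_re_zero
    · have hrw : -((lam j : ℂ) * η * ζ ^ (j:ℕ) * ((mu k : ℂ) * ζ ^ (k:ℕ))) *
          ((ζ ^ (j:ℕ) - η * ζ ^ (k:ℕ))⁻¹) ^ 2
          = ((-(lam j * mu k) : ℝ) : ℂ) *
            ((ζ ^ (j:ℕ)) * (η * ζ ^ (k:ℕ)) / ((ζ ^ (j:ℕ)) - η * ζ ^ (k:ℕ)) ^ 2) := by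
        rw [div_eq_mul_inv, ← inv_pow]
        push_cast
        ring
      rw [hrw, Complex.mul_im]
      have him : ((ζ ^ (j:ℕ)) * (η * ζ ^ (k:ℕ)) /
          ((ζ ^ (j:ℕ)) - η * ζ ^ (k:ℕ)) ^ 2).im = 0 := by
        apply aux_im_zero
        · rw [hζ]; exact habsE _
        · rw [hη]; exact habsE _
        · exact hpq j k
      simp [him]
    · have h2pi : ((2:ℂ) * (Real.pi : ℂ) * Complex.I).re = 0 := by simp
      rw [Complex.sub_re]
      split_ifs <;> simp [h2pi]
  simp only [Set.mem_union, Set.mem_range] at hc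
  rcases hc with ⟨l, hl⟩ | ⟨m, hm⟩
  · apply main
    · intro j
      by_cases hjc : ζ ^ (j:ℕ) = c
      · exact Or.inl hjc
      · refine Or.inr ?_
        rw [← hl, hζ, hζ]
        apply hdist _ _ (by have := j.isLt; omega) (by have := l.isLt; omega)
        intro heq
        apply hjc
        rw [hζ, heq, ← hζ, hl]
    · intro k
      refine Or.inr ?_
      rw [← hl, hη, hζ]
      exact hdist _ _ (by have := k.isLt; omega) (by have := l.isLt; omega) (by omega)
  · apply main
    · intro j
      refine Or.inr ?_
      rw [← hm, hζ, hη]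
      exact hdist _ _ (by have := j.isLt; omega) (by have := m.isLt; omega) (by omega)
    · intro k
      by_cases hkc : η * ζ ^ (k:ℕ) = c
      · exact Or.inl hkc
      · refine Or.inr ?_
        rw [← hm, hη, hη]
        apply hdist _ _ (by have := k.isLt; omega) (by have := m.isLt; omega)
        intro heq
        apply hkc
        rw [hη, heq, ← hη, hm]
end
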